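/- Let T be a tree with order n and domination number gamma, where 1 <= gamma <= floor(n/2). Then s(T) >= n + gamma - 2, with equality if and only if T is isomorphic to A_{n,gamma}. -/

import Mathlib

/-!
Every vertex `u` of a tree is at distance `1` from its `deg u` neighbours and at distance at
least `2` from the other `n - 1 - deg u` vertices, so `s(u) ≥ 2n - 2 - deg u`; the vertices
outside the neighbourhood of `u` dominate, so `deg u ≤ n - γ`. Hence `s(u) ≥ n + γ - 2`, and in
case of equality `deg u = n - γ` and all non-neighbours are at distance exactly `2`. Labelling
`u`, its neighbours and the vertices below them then gives a bijective homomorphism from the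
connected graph `A_{n,γ}` onto `T`, which is an isomorphism because `T` is acyclic.
-/

open SimpleGraph

variable {V : Type*}

/-- The status of a vertex: sum of distances to all other vertices. -/
noncomputable def status [Fintype V] (G : SimpleGraph V) (u : V) : ℕ :=
  ∑ v : V, G.dist u v

/-- The minimum status of a graph. -/
noncomputable def minStatus [Fintype V] (G : SimpleGraph V) : ℕ :=
  sInf (Set.range (status G))

/-- The matching number: maximum cardinality of a matching. -/
noncomputable def matchingNumber (G : SimpleGraph V) : ℕ :=
  sSup {k | ∃ M : G.Subgraph, M.IsMatching ∧ M.edgeSet.ncard = k}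

/-- The domination number: minimum cardinality of a dominating set. -/
noncomputable def domNumber (G : SimpleGraph V) : ℕ :=
  sInf {k | ∃ S : Set V, (∀ v ∉ S, ∃ u ∈ S, G.Adj u v) ∧ S.ncard = k}

/-- The dumbbell `D_n(p,q)`: a path on `n - p - q` vertices `0, …, n-p-q-1`,
with `p` pendant vertices attached to vertex `0` and `q` pendant vertices
attached to vertex `n-p-q-1`. -/
def dumbbell (n p q : ℕ) : SimpleGraph (Fin n) :=
  SimpleGraph.fromRel (fun a b =>
    ((a : ℕ) + 1 = (b : ℕ) ∧ (b : ℕ) < n - p - q) ∨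
    ((a : ℕ) = 0 ∧ n - p - q ≤ (b : ℕ) ∧ (b : ℕ) < n - q) ∨
    ((a : ℕ) = n - p - q - 1 ∧ n - q ≤ (b : ℕ)))

/-- The tree `A_{n,m}`: a star with center `0` and leaves `1, …, n-m`, with one
pendant vertex `n-m+i` attached to leaf `i` for each `i = 1, …, m-1`. -/
def treeA (n m : ℕ) : SimpleGraph (Fin n) :=
  SimpleGraph.fromRel (fun a b =>
    ((a : ℕ) = 0 ∧ 1 ≤ (b : ℕ) ∧ (b : ℕ) ≤ n - m) ∨
    (1 ≤ (a : ℕ) ∧ (a : ℕ) ≤ m - 1 ∧ (b : ℕ) = n - m + (a : ℕ)))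

/-- The caterpillar `C_n(p,q)`: a path on vertices `0, …, n-p-q-1`; pendant
vertex `n-p-q+j` is attached to path vertex `j` for `j = 0, …, p-1`, and pendant
vertex `n-q+j` is attached to path vertex `n-p-2q+j` for `j = 0, …, q-1`. -/
def caterpillar (n p q : ℕ) : SimpleGraph (Fin n) :=
  SimpleGraph.fromRel (fun a b =>
    ((a : ℕ) + 1 = (b : ℕ) ∧ (b : ℕ) < n - p - q) ∨
    (n - p - q ≤ (b : ℕ) ∧ (b : ℕ) < n - q ∧ (a : ℕ) = (b : ℕ) - (n - p - q)) ∨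
    (n - q ≤ (b : ℕ) ∧ (a : ℕ) = (b : ℕ) - p - q))


namespace SimpleGraph

variable {W : Type*} {G : SimpleGraph V} {H : SimpleGraph W}

theorem Hom.dist_le (f : G →g H) {u v : V} (h : G.Reachable u v) :
    H.dist (f u) (f v) ≤ G.dist u v := by
  obtain ⟨p, hp⟩ := h.exists_walk_length_eq_dist
  simpa [hp] using SimpleGraph.dist_le (p.map f)

theorem Iso.dist_eq (e : G ≃g H) (u v : V) : H.dist (e u) (e v) = G.dist u v := by
  by_cases h : G.Reachable u v
  · have h' : H.Reachable (e u) (e v) := h.map e.toHom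
    refine le_antisymm (Hom.dist_le e.toHom h) ?_
    simpa using Hom.dist_le e.symm.toHom h'
  · have h' : ¬ H.Reachable (e u) (e v) := fun h' => h (by simpa using h'.map e.symm.toHom)
    rw [dist_eq_zero_of_not_reachable h, dist_eq_zero_of_not_reachable h']

theorem exists_adj_adj_of_dist_eq_two {u v : V} (h : G.dist u v = 2) :
    ∃ x, G.Adj u x ∧ G.Adj x v := by
  have hr : G.Reachable u v := Reachable.of_dist_ne_zero (by omega)
  obtain ⟨-, -, x, hx⟩ := edist_eq_two_iff.1 (by rw [← hr.coe_dist_eq_edist, h]; rfl)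
  exact ⟨x, (G.mem_commonNeighbors.1 hx).1, (G.mem_commonNeighbors.1 hx).2.symm⟩

/-- The image of a path is a path, and in a forest it must be the edge itself. -/
theorem Hom.adj_of_adj_of_isAcyclic (f : G →g H) (hf : Function.Injective f) (hG : G.Connected)
    (hH : H.IsAcyclic) {a b : V} (h : H.Adj (f a) (f b)) : G.Adj a b := by
  obtain ⟨p, hp⟩ := (hG a b).exists_walk_length_eq_dist
  have hpath : p.IsPath := p.isPath_of_length_eq_dist hp
  have := congrArg (fun q : H.Path (f a) (f b) => q.1.length)
    ((hH.subsingleton_path _ _).elim ⟨p.map f, hpath.map hf⟩ (Path.singleton h))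
  exact Walk.adj_of_length_eq_one (by simpa using this)

theorem nonempty_iso_of_bijective_of_isAcyclic (f : G →g H) (hf : Function.Bijective f)
    (hG : G.Connected) (hH : H.IsAcyclic) : Nonempty (G ≃g H) :=
  ⟨⟨Equiv.ofBijective f hf, ⟨f.adj_of_adj_of_isAcyclic hf.1 hG hH, f.map_adj⟩⟩⟩

end SimpleGraph

theorem domNumber_le_card {G : SimpleGraph V} (s : Finset V)
    (hs : ∀ v ∉ s, ∃ u ∈ s, G.Adj u v) : domNumber G ≤ s.card :=
  Nat.sInf_le ⟨s, by simpa using hs, Set.ncard_coe_finset s⟩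

theorem domNumber_le_card_add_one [DecidableEq V] {G : SimpleGraph V} {u : V} (s : Finset V)
    (hs : ∀ v, u ≠ v → ¬ G.Adj u v → ∃ x ∈ s, G.Adj x v) : domNumber G ≤ s.card + 1 := by
  refine (domNumber_le_card (insert u s) fun v hv => ?_).trans (Finset.card_insert_le u s)
  by_cases hadj : G.Adj u v
  · exact ⟨u, Finset.mem_insert_self u s, hadj⟩
  · obtain ⟨x, hx, hxv⟩ := hs v (fun h => hv (h ▸ Finset.mem_insert_self u s)) hadj
    exact ⟨x, Finset.mem_insert_of_mem hx, hxv⟩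

section Status

variable {G : SimpleGraph V}

theorem two_le_dist_add_adj_add [DecidableEq V] [DecidableRel G.Adj] (hG : G.Connected)
    (u v : V) :
    2 ≤ G.dist u v + (if G.Adj u v then 1 else 0) + if u = v then 2 else 0 := by
  by_cases huv : u = v
  · simp [huv]
  by_cases hadj : G.Adj u v
  · simp [huv, hadj, dist_eq_one_iff_adj.mpr hadj]
  · simpa [huv, hadj, Nat.succ_le_iff] using hG.one_lt_dist_of_ne_of_not_adj huv hadj

variable [Fintype V]

theorem domNumber_add_degree_le [DecidableRel G.Adj] (u : V) :
    domNumber G + G.degree u ≤ Fintype.card V := by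
  classical
  have h := domNumber_le_card (G := G) (G.neighborFinset u)ᶜ fun v hv =>
    ⟨u, by simp, by simpa using hv⟩
  rw [Finset.card_compl, card_neighborFinset_eq_degree] at h
  have := G.degree_lt_card_verts u
  omega

theorem minStatus_le_status (u : V) : minStatus G ≤ status G u :=
  Nat.sInf_le ⟨u, rfl⟩

theorem exists_status_eq_minStatus [Nonempty V] : ∃ u, status G u = minStatus G :=
  Nat.sInf_mem (Set.range_nonempty _)

theorem status_iso {W : Type*} [Fintype W] {H : SimpleGraph W} (e : G ≃g H) (u : V) :
    status H (e u) = status G u := by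
  unfold status
  rw [← e.toEquiv.sum_comp]
  exact Finset.sum_congr rfl fun v _ => e.dist_eq u v

variable [DecidableEq V] [DecidableRel G.Adj]

theorem sum_dist_add_adj_add_eq (u : V) :
    ∑ v, (G.dist u v + (if G.Adj u v then 1 else 0) + if u = v then 2 else 0) =
      status G u + G.degree u + 2 := by
  simp only [Finset.sum_add_distrib, Finset.sum_boole, Finset.sum_ite_eq, Finset.mem_univ,
    if_true, Nat.cast_id, status]
  rw [← card_neighborFinset_eq_degree, neighborFinset_eq_filter]

theorem two_mul_card_le_status_add_degree (hG : G.Connected) (u : V) :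
    2 * Fintype.card V ≤ status G u + G.degree u + 2 := by
  rw [← sum_dist_add_adj_add_eq, mul_comm, ← smul_eq_mul, ← Finset.card_univ,
    ← Finset.sum_const]
  exact Finset.sum_le_sum fun v _ => two_le_dist_add_adj_add hG u v

theorem dist_eq_two_of_status_add_degree_eq (hG : G.Connected) {u : V}
    (h : status G u + G.degree u + 2 = 2 * Fintype.card V) {v : V} (huv : u ≠ v)
    (hadj : ¬ G.Adj u v) : G.dist u v = 2 := by
  rw [← sum_dist_add_adj_add_eq, mul_comm, ← smul_eq_mul, ← Finset.card_univ,
    ← Finset.sum_const, eq_comm, Finset.sum_eq_sum_iff_of_le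
      fun v _ => two_le_dist_add_adj_add hG u v] at h
  simpa [huv, hadj] using (h v (Finset.mem_univ v)).symm

end Status

section TreeA

variable {n γ : ℕ}

theorem treeA_adj_center {a b : Fin n} (ha : (a : ℕ) = 0) (hb : 1 ≤ (b : ℕ))
    (hb' : (b : ℕ) ≤ n - γ) : (treeA n γ).Adj a b := by
  rw [treeA, fromRel_adj]
  exact ⟨fun h => by omega, Or.inl (Or.inl ⟨ha, hb, hb'⟩)⟩

theorem treeA_adj_pendant (hγn : γ < n) {a b : Fin n} (ha : 1 ≤ (a : ℕ))
    (ha' : (a : ℕ) ≤ γ - 1) (hb : (b : ℕ) = n - γ + a) : (treeA n γ).Adj a b := by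
  rw [treeA, fromRel_adj]
  exact ⟨fun h => by subst h; omega, Or.inl (Or.inr ⟨ha, ha', hb⟩)⟩

theorem treeA_exists_walk_from_zero (h2 : 2 * γ ≤ n) (h0 : 0 < n) (w : Fin n) :
    ∃ p : (treeA n γ).Walk ⟨0, h0⟩ w,
      p.length = (if 1 ≤ (w : ℕ) then 1 else 0) + if n - γ + 1 ≤ (w : ℕ) then 1 else 0 := by
  have hw := w.isLt
  by_cases hw0 : (w : ℕ) = 0
  · obtain rfl : w = ⟨0, h0⟩ := Fin.ext hw0
    exact ⟨.nil, by simp⟩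
  by_cases hwc : (w : ℕ) ≤ n - γ
  · refine ⟨(treeA_adj_center rfl (by omega) hwc).toWalk, ?_⟩
    rw [if_pos (by omega), if_neg (by omega)]
    rfl
  · let a : Fin n := ⟨w - (n - γ), by omega⟩
    refine ⟨.cons (treeA_adj_center (b := a) rfl (by simp [a]; omega) (by simp [a]; omega))
      (treeA_adj_pendant (by omega) (by simp [a]; omega) (by simp [a]; omega)
        (by simp [a]; omega)).toWalk, ?_⟩
    rw [if_pos (by omega), if_pos (by omega)]
    rfl

theorem treeA_connected (h2 : 2 * γ ≤ n) (h0 : 0 < n) : (treeA n γ).Connected :=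
  (connected_iff_exists_forall_reachable _).2
    ⟨⟨0, h0⟩, fun w => ⟨(treeA_exists_walk_from_zero h2 h0 w).choose⟩⟩

theorem status_treeA_zero_le (h1 : 1 ≤ γ) (h2 : 2 * γ ≤ n) :
    status (treeA n γ) ⟨0, by omega⟩ ≤ n + γ - 2 := by
  have hcount (k : ℕ) : ∑ w : Fin n, (if k ≤ (w : ℕ) then 1 else 0) = n - k := by
    rw [Fin.sum_univ_eq_sum_range (fun i => if k ≤ i then 1 else 0), Finset.sum_boole,
      Finset.range_eq_Ico, Finset.Ico_filter_le, Nat.card_Ico]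
    simp
  calc status (treeA n γ) ⟨0, by omega⟩
      ≤ ∑ w : Fin n, ((if 1 ≤ (w : ℕ) then 1 else 0) + if n - γ + 1 ≤ (w : ℕ) then 1 else 0) :=
        Finset.sum_le_sum fun w _ => by
          obtain ⟨p, hp⟩ := treeA_exists_walk_from_zero h2 (by omega) w
          exact hp ▸ dist_le p
    _ = n + γ - 2 := by
        rw [Finset.sum_add_distrib, hcount, hcount]
        omega

end TreeA

section Recognition

variable {W : Type*} {n γ : ℕ}

/-- In `treeA n γ`, `0` is the centre, `1, …, γ - 1` are the leaves carrying the pendants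
`n - γ + 1, …, n - 1`, and `γ, …, n - γ` are the bare leaves. -/
def labelTreeA (u : W) (a b : Fin (γ - 1) → W) (c : Fin (n + 1 - 2 * γ) → W) (i : Fin n) : W :=
  if h0 : (i : ℕ) = 0 then u
  else if ha : (i : ℕ) < γ then a ⟨i - 1, by omega⟩
  else if hc : (i : ℕ) ≤ n - γ then c ⟨i - γ, by omega⟩
  else b ⟨i - (n - γ + 1), by have := i.isLt; omega⟩

def homTreeA (h2 : 2 * γ ≤ n) {G : SimpleGraph W} (u : W) (a b : Fin (γ - 1) → W)
    (c : Fin (n + 1 - 2 * γ) → W) (hua : ∀ j, G.Adj u (a j)) (huc : ∀ j, G.Adj u (c j))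
    (hab : ∀ j, G.Adj (a j) (b j)) : treeA n γ →g G where
  toFun := labelTreeA u a b c
  map_rel' := by
    have map_oriented (i k : Fin n) (h : ((i : ℕ) = 0 ∧ 1 ≤ (k : ℕ) ∧ (k : ℕ) ≤ n - γ) ∨
        (1 ≤ (i : ℕ) ∧ (i : ℕ) ≤ γ - 1 ∧ (k : ℕ) = n - γ + i)) :
        G.Adj (labelTreeA u a b c i) (labelTreeA u a b c k) := by
      have := k.isLt
      rcases h with ⟨hi, hk, hk'⟩ | ⟨hi, hi', hk⟩
      · unfold labelTreeA
        rw [dif_pos hi, dif_neg (by omega)]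
        split_ifs
        exacts [hua _, huc _]
      · unfold labelTreeA
        rw [dif_neg (by omega), dif_pos (by omega), dif_neg (by omega), dif_neg (by omega),
          dif_neg (by omega)]
        convert hab ⟨i - 1, by omega⟩ using 3
        omega
    intro i k h
    rw [treeA, fromRel_adj] at h
    rcases h.2 with h | h
    exacts [map_oriented i k h, (map_oriented k i h).symm]

@[simp]
theorem coe_homTreeA (h2 : 2 * γ ≤ n) {G : SimpleGraph W} (u : W) (a b : Fin (γ - 1) → W)
    (c : Fin (n + 1 - 2 * γ) → W) (hua : ∀ j, G.Adj u (a j)) (huc : ∀ j, G.Adj u (c j))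
    (hab : ∀ j, G.Adj (a j) (b j)) :
    ⇑(homTreeA h2 u a b c hua huc hab) = labelTreeA u a b c :=
  rfl

theorem labelTreeA_surjective (h1 : 1 ≤ γ) (h2 : 2 * γ ≤ n) {u : W} {a b : Fin (γ - 1) → W}
    {c : Fin (n + 1 - 2 * γ) → W}
    (hcov : ∀ v, v = u ∨ (∃ j, a j = v) ∨ (∃ j, b j = v) ∨ ∃ j, c j = v) :
    Function.Surjective (labelTreeA (n := n) u a b c) := by
  intro v
  rcases hcov v with rfl | ⟨j, rfl⟩ | ⟨j, rfl⟩ | ⟨j, rfl⟩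
  · exact ⟨⟨0, by omega⟩, dif_pos rfl⟩
  · refine ⟨⟨j + 1, by omega⟩, ?_⟩
    simp only [labelTreeA]
    rw [dif_neg (by omega : (j : ℕ) + 1 ≠ 0), dif_pos (by omega : (j : ℕ) + 1 < γ)]
    simp
  · refine ⟨⟨n - γ + 1 + j, by omega⟩, ?_⟩
    simp only [labelTreeA]
    rw [dif_neg (by omega : n - γ + 1 + (j : ℕ) ≠ 0),
      dif_neg (by omega : ¬ n - γ + 1 + (j : ℕ) < γ),
      dif_neg (by omega : ¬ n - γ + 1 + (j : ℕ) ≤ n - γ)]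
    simp
  · refine ⟨⟨γ + j, by omega⟩, ?_⟩
    simp only [labelTreeA]
    rw [dif_neg (by omega : γ + (j : ℕ) ≠ 0), dif_neg (by omega : ¬ γ + (j : ℕ) < γ),
      dif_pos (by omega : γ + (j : ℕ) ≤ n - γ)]
    simp

end Recognition

/-- The vertices at distance two from `u` hang from at least `γ - 1` distinct neighbours of `u`,
since those neighbours together with `u` dominate. -/
theorem exists_surjective_hom_treeA [Fintype V] [DecidableEq V] {T : SimpleGraph V}
    [DecidableRel T.Adj] {n γ : ℕ} (h1 : 1 ≤ γ) (h2 : 2 * γ ≤ n) (hn : Fintype.card V = n)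
    {u : V} (hdeg : T.degree u + γ = n) (hdom : γ ≤ domNumber T)
    (hcov : ∀ v, u ≠ v → ¬ T.Adj u v → ∃ x, T.Adj u x ∧ T.Adj x v) :
    ∃ f : treeA n γ →g T, Function.Surjective f := by
  set N := T.neighborFinset u
  set F := (insert u N)ᶜ
  have hmemF (v : V) : v ∈ F ↔ u ≠ v ∧ ¬ T.Adj u v := by
    simp [F, N, eq_comm]
  have hF : Fintype.card F = γ - 1 := by
    rw [Fintype.card_coe, Finset.card_compl, Finset.card_insert_of_notMem (by simp [N]),
      card_neighborFinset_eq_degree]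
    omega
  choose p hup hpv using fun v : F => hcov v ((hmemF v).1 v.2).1 ((hmemF v).1 v.2).2
  set S := Finset.univ.image p
  have hSN : S ⊆ N := by
    intro x hx
    obtain ⟨f, -, rfl⟩ := Finset.mem_image.1 hx
    simpa [N] using hup f
  have hS : S.card = γ - 1 := by
    refine le_antisymm (hF ▸ Finset.card_image_le) ?_
    have := domNumber_le_card_add_one S fun v huv hadj =>
      ⟨p ⟨v, (hmemF v).2 ⟨huv, hadj⟩⟩, Finset.mem_image_of_mem p (Finset.mem_univ _), hpv _⟩
    omega
  have hR : Fintype.card ↥(N \ S) = n + 1 - 2 * γ := by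
    rw [Fintype.card_coe, Finset.card_sdiff_of_subset hSN, card_neighborFinset_eq_degree]
    omega
  let eF := (Fintype.equivFinOfCardEq hF).symm
  let eR := (Fintype.equivFinOfCardEq hR).symm
  refine ⟨homTreeA h2 u (fun j => p (eF j)) (fun j => eF j) (fun j => eR j) (fun j => hup _)
    (fun j => by simpa [N] using (Finset.mem_sdiff.1 (eR j).2).1) (fun j => hpv _), ?_⟩
  rw [coe_homTreeA]
  refine labelTreeA_surjective h1 h2 fun v => ?_
  by_cases hvu : v = u
  · exact Or.inl hvu
  by_cases hvN : v ∈ N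
  · by_cases hvS : v ∈ S
    · obtain ⟨f, -, rfl⟩ := Finset.mem_image.1 hvS
      exact Or.inr (Or.inl ⟨eF.symm f, by simp [eF]⟩)
    · exact Or.inr (Or.inr (Or.inr ⟨eR.symm ⟨v, Finset.mem_sdiff.2 ⟨hvN, hvS⟩⟩, by simp [eR]⟩))
  · have hvF : v ∈ F := by simp [F, hvu, hvN]
    exact Or.inr (Or.inr (Or.inl ⟨eF.symm ⟨v, hvF⟩, by simp [eF]⟩))

theorem card_add_domNumber_le_minStatus [Fintype V] {G : SimpleGraph V} (hG : G.Connected) :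
    Fintype.card V + domNumber G ≤ minStatus G + 2 := by
  classical
  have := hG.nonempty
  obtain ⟨u, hu⟩ := exists_status_eq_minStatus (G := G)
  have := two_mul_card_le_status_add_degree hG u
  have := domNumber_add_degree_le (G := G) u
  omega

theorem nonempty_iso_treeA_of_status_eq [Fintype V] {T : SimpleGraph V} (hT : T.IsTree)
    {n γ : ℕ} (h1 : 1 ≤ γ) (h2 : 2 * γ ≤ n) (hn : Fintype.card V = n) (hγ : domNumber T = γ)
    {u : V} (hu : status T u = n + γ - 2) : Nonempty (T ≃g treeA n γ) := by
  classical
  have hconn := hT.connected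
  have := two_mul_card_le_status_add_degree hconn u
  have := domNumber_add_degree_le (G := T) u
  have hsum : status T u + T.degree u + 2 = 2 * Fintype.card V := by omega
  obtain ⟨f, hf⟩ := exists_surjective_hom_treeA h1 h2 hn (u := u) (by omega) hγ.ge
    fun v huv hadj => exists_adj_adj_of_dist_eq_two
      (dist_eq_two_of_status_add_degree_eq hconn hsum huv hadj)
  have hbij : Function.Bijective f :=
    (Fintype.bijective_iff_surjective_and_card f).2 ⟨hf, by simp [hn]⟩
  obtain ⟨e⟩ := nonempty_iso_of_bijective_of_isAcyclic f hbij
    (treeA_connected h2 (by omega)) hT.isAcyclic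
  exact ⟨e.symm⟩

/-- Lower bound on the minimum status of a tree with given order and domination
number, with equality iff `T ≅ A_{n,γ}`. -/
theorem stmt7 [Fintype V] (T : SimpleGraph V) (n γ : ℕ)
    (hn : Fintype.card V = n) (hT : T.IsTree)
    (hγ : domNumber T = γ) (h1 : 1 ≤ γ) (h2 : 2 * γ ≤ n) :
    n + γ - 2 ≤ minStatus T ∧
      (minStatus T = n + γ - 2 ↔ Nonempty (T ≃g treeA n γ)) := by
  have hbound := card_add_domNumber_le_minStatus hT.connected
  rw [hn, hγ] at hbound
  refine ⟨by omega, fun hmin => ?_, fun ⟨e⟩ => ?_⟩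
  · have := hT.connected.nonempty
    obtain ⟨u, hu⟩ := exists_status_eq_minStatus (G := T)
    exact nonempty_iso_treeA_of_status_eq hT h1 h2 hn hγ (hu.trans hmin)
  · have := minStatus_le_status (G := T) (e.symm ⟨0, by omega⟩)
    rw [← status_iso e, e.apply_symm_apply] at this
    have := status_treeA_zero_le h1 h2
    omega
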